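/- arXiv:2511.00944 — 4 statements merged into one kernel-verified Lean document; each statement's English description precedes it below -/
import Mathlib

section
/- Let σ > 0, u ≠ 0, and let (Y_j)_{j≥1} be an i.i.d. sequence of real random variables with law N(0,σ²). Define the ECF spot variance estimator σ̂²_k := −(2/u²)·log( max( (1/k)·∑_{j=1}^{k} cos(u·Y_j), k^{−1/2} ) ). Then σ̂²_k → σ² almost surely as k → ∞. (Consistency of the empirical-characteristic-function spot volatility estimator in the model with constant volatility and no jumps, the baseline case of Proposition 1.) -/
/-!
By the strong law of large numbers the empirical characteristic function
`(1/k) ∑_{j ≤ k} cos (u Y_j)` converges almost surely to `E[cos (u Y₁)] = exp (-u²σ²/2) > 0`.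
The truncation level `k^{-1/2}` tends to `0`, so the truncated mean has the same positive
limit, and continuity of `log` there gives `σ̂²_k → -(2/u²) (-u²σ²/2) = σ²`.
-/

open MeasureTheory ProbabilityTheory Real Finset Filter Topology
open scoped NNReal

lemma integral_cos_mul_eq_re_charFun (μ : Measure ℝ) [IsFiniteMeasure μ] (t : ℝ) :
    ∫ x, cos (t * x) ∂μ = (charFun μ t).re := by
  have hint : Integrable (fun x : ℝ => Complex.exp (t * x * Complex.I)) μ :=
    (integrable_const (1 : ℝ)).mono' (by fun_prop) (.of_forall fun x => by
      simp [← Complex.ofReal_mul, Complex.norm_exp_ofReal_mul_I])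
  rw [charFun_apply_real, ← RCLike.re_eq_complex_re, ← integral_re hint]
  simp_rw [RCLike.re_eq_complex_re, ← Complex.ofReal_mul, Complex.exp_ofReal_mul_I_re]

lemma integral_cos_mul_gaussianReal (v : ℝ≥0) (t : ℝ) :
    ∫ x, cos (t * x) ∂gaussianReal 0 v = exp (-(t ^ 2 * v) / 2) := by
  rw [integral_cos_mul_eq_re_charFun, charFun_gaussianReal,
    show (t : ℂ) * (0 : ℝ) * Complex.I - v * t ^ 2 / 2 = ((-(t ^ 2 * v) / 2 : ℝ) : ℂ) by
      push_cast; ring,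
    Complex.exp_ofReal_re]

theorem strong_law_ae_real_comp_Icc {Ω E : Type*} [MeasurableSpace Ω] [MeasurableSpace E]
    {P : Measure Ω} {μ : Measure E} {Y : ℕ → Ω → E} (hmeas : ∀ j, AEMeasurable (Y j) P)
    (hindep : Pairwise fun i j => IndepFun (Y i) (Y j) P) (hlaw : ∀ j, P.map (Y j) = μ)
    {f : E → ℝ} (hf : Measurable f) (hfμ : Integrable f μ) :
    ∀ᵐ ω ∂P, Tendsto (fun k : ℕ => (1 / (k : ℝ)) * ∑ j ∈ Icc 1 k, f (Y j ω)) atTop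
      (𝓝 (∫ x, f x ∂μ)) := by
  set X : ℕ → Ω → ℝ := fun i ω => f (Y (i + 1) ω)
  have hident : ∀ i, IdentDistrib (X i) (X 0) P P := fun i =>
    (IdentDistrib.mk (hmeas _) (hmeas _) (by rw [hlaw, hlaw])).comp hf
  have hint : Integrable (X 0) P := by
    rw [← hlaw 1] at hfμ
    exact hfμ.comp_aemeasurable (hmeas 1)
  have hpair : Pairwise fun i j => IndepFun (X i) (X j) P := fun i j hij =>
    (hindep (by omega : i + 1 ≠ j + 1)).comp hf hf
  have hmean : ∫ ω, X 0 ω ∂P = ∫ x, f x ∂μ := by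
    rw [← hlaw 1, integral_map (hmeas 1) hf.aestronglyMeasurable]
  filter_upwards [strong_law_ae_real X hint hpair hident] with ω hω
  rw [hmean] at hω
  refine hω.congr fun k => ?_
  rw [div_eq_inv_mul, one_div, ← Ico_add_one_right_eq_Icc, sum_Ico_eq_sum_range,
    add_tsub_cancel_right]
  simp only [X, add_comm]

lemma tendsto_neg_two_div_sq_mul_log_max {α : Type*} {l : Filter α} {a b : α → ℝ} {u v : ℝ}
    (hu : u ≠ 0) (ha : Tendsto a l (𝓝 (exp (-(u ^ 2 * v) / 2)))) (hb : Tendsto b l (𝓝 0)) :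
    Tendsto (fun k => -(2 / u ^ 2) * log (max (a k) (b k))) l (𝓝 v) := by
  have hmax : Tendsto (fun k => max (a k) (b k)) l (𝓝 (exp (-(u ^ 2 * v) / 2))) := by
    simpa [max_eq_left (exp_pos _).le] using ha.max hb
  have hlog := ((continuousAt_log (exp_pos _).ne').tendsto.comp hmax).const_mul (-(2 / u ^ 2))
  rwa [log_exp, show -(2 / u ^ 2) * (-(u ^ 2 * v) / 2) = v by field_simp] at hlog

lemma tendsto_inv_sqrt_natCast_atTop : Tendsto (fun k : ℕ => (√(k : ℝ))⁻¹) atTop (𝓝 0) :=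
  tendsto_inv_atTop_zero.comp <| tendsto_sqrt_atTop.comp tendsto_natCast_atTop_atTop

theorem ecf_spot_variance_estimator_consistent_general {Ω : Type*} [MeasureSpace Ω]
    (σ u : ℝ) (hu : u ≠ 0)
    (Y : ℕ → Ω → ℝ) (hmeas : ∀ j, Measurable (Y j))
    (hindep : iIndepFun Y ℙ)
    (hlaw : ∀ j, Measure.map (Y j) ℙ = gaussianReal 0 ⟨σ ^ 2, sq_nonneg σ⟩)
    (est : ℕ → Ω → ℝ)
    (hest : ∀ k ω, est k ω
      = -(2 / u ^ 2) * Real.log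
          (max ((1 / (k : ℝ)) * ∑ j ∈ Finset.Icc 1 k, Real.cos (u * Y j ω))
            ((Real.sqrt k)⁻¹))) :
    ∀ᵐ ω ∂ℙ, Tendsto (fun k => est k ω) atTop (nhds (σ ^ 2)) := by
  -- as written in `hlaw` the variance has type `{r // 0 ≤ r}`, on which instance search fails
  set v : ℝ≥0 := ⟨σ ^ 2, sq_nonneg σ⟩
  have hcos : Measurable fun x : ℝ => cos (u * x) := by fun_prop
  have hslln := strong_law_ae_real_comp_Icc (fun j => (hmeas j).aemeasurable)
    (fun _ _ hij => hindep.indepFun hij) hlaw hcos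
    ((integrable_const (1 : ℝ)).mono' hcos.aestronglyMeasurable
      (.of_forall fun x => abs_cos_le_one _))
  filter_upwards [hslln] with ω hω
  rw [integral_cos_mul_gaussianReal] at hω
  exact (tendsto_neg_two_div_sq_mul_log_max hu hω tendsto_inv_sqrt_natCast_atTop).congr
    fun k => (hest k ω).symm

/-- Consistency of the ECF spot variance estimator: for an i.i.d. `N(0,σ²)` sequence
`(Y_j)` and `u ≠ 0`,
`σ̂²_k := −(2/u²)·log(max((1/k)∑_{j=1}^{k} cos(u·Y_j), k^{−1/2})) → σ²` almost surely. -/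
theorem ecf_spot_variance_estimator_consistent {Ω : Type*} [MeasureSpace Ω]
    [IsProbabilityMeasure (ℙ : Measure Ω)]
    (σ u : ℝ) (hσ : 0 < σ) (hu : u ≠ 0)
    (Y : ℕ → Ω → ℝ) (hmeas : ∀ j, Measurable (Y j))
    (hindep : iIndepFun Y ℙ)
    (hlaw : ∀ j, Measure.map (Y j) ℙ = gaussianReal 0 ⟨σ ^ 2, sq_nonneg σ⟩)
    (est : ℕ → Ω → ℝ)
    (hest : ∀ k ω, est k ω
      = -(2 / u ^ 2) * Real.log
          (max ((1 / (k : ℝ)) * ∑ j ∈ Finset.Icc 1 k, Real.cos (u * Y j ω))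
            ((Real.sqrt k)⁻¹))) :
    ∀ᵐ ω ∂ℙ, Tendsto (fun k => est k ω) atTop (nhds (σ ^ 2)) :=
  ecf_spot_variance_estimator_consistent_general σ u hu Y hmeas hindep hlaw est hest
end

section
/- The limit lim_{k→∞} (9/k⁷)·∑_{m=1}^{k} (∑_{s=1}^{k−m} s²)·(∑_{s=m+1}^{k} s²) = 17/70 holds. (This Riemann-sum limit produces the coefficient 17/70 of h₂² in the covariance summation of overlapping-window terms in Lemma 4, used for the asymptotic variance of the volatility of volatility estimator in Theorem 2.) -/
open Filter Finset

private lemma sq_sum_closed (n : ℕ) :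
    ∑ s ∈ Finset.Icc 1 n, (s : ℝ) ^ 2 = n * (n + 1) * (2 * n + 1) / 6 := by
  induction n with
  | zero => simp
  | succ n ih =>
    rw [Finset.sum_Icc_succ_top (by omega), ih]
    push_cast; ring

private lemma pow1_sum (k : ℕ) :
    ∑ m ∈ Finset.Icc 1 k, (m : ℝ) = k * (k + 1) / 2 := by
  induction k with
  | zero => simp
  | succ n ih => rw [Finset.sum_Icc_succ_top (by omega), ih]; push_cast; ring

private lemma pow2_sum (k : ℕ) :
    ∑ m ∈ Finset.Icc 1 k, (m : ℝ) ^ 2 = k * (k + 1) * (2 * k + 1) / 6 := by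
  induction k with
  | zero => simp
  | succ n ih => rw [Finset.sum_Icc_succ_top (by omega), ih]; push_cast; ring

private lemma pow3_sum (k : ℕ) :
    ∑ m ∈ Finset.Icc 1 k, (m : ℝ) ^ 3 = (k * (k + 1) / 2) ^ 2 := by
  induction k with
  | zero => simp
  | succ n ih => rw [Finset.sum_Icc_succ_top (by omega), ih]; push_cast; ring

private lemma pow4_sum (k : ℕ) :
    ∑ m ∈ Finset.Icc 1 k, (m : ℝ) ^ 4
      = k * (k + 1) * (2 * k + 1) * (3 * k ^ 2 + 3 * k - 1) / 30 := by
  induction k with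
  | zero => simp
  | succ n ih => rw [Finset.sum_Icc_succ_top (by omega), ih]; push_cast; ring

private lemma pow5_sum (k : ℕ) :
    ∑ m ∈ Finset.Icc 1 k, (m : ℝ) ^ 5
      = k ^ 2 * (k + 1) ^ 2 * (2 * k ^ 2 + 2 * k - 1) / 12 := by
  induction k with
  | zero => simp
  | succ n ih => rw [Finset.sum_Icc_succ_top (by omega), ih]; push_cast; ring

private lemma pow6_sum (k : ℕ) :
    ∑ m ∈ Finset.Icc 1 k, (m : ℝ) ^ 6
      = k * (k + 1) * (2 * k + 1) * (3 * k ^ 4 + 6 * k ^ 3 - 3 * k + 1) / 42 := by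
  induction k with
  | zero => simp
  | succ n ih => rw [Finset.sum_Icc_succ_top (by omega), ih]; push_cast; ring

private lemma total_sum_closed (k : ℕ) :
    (∑ m ∈ Finset.Icc 1 k,
        (∑ s ∈ Finset.Icc 1 (k - m), (s : ℝ) ^ 2)
          * ∑ s ∈ Finset.Icc (m + 1) k, (s : ℝ) ^ 2)
      = 17 / 630 * (k : ℝ) ^ 7 + 13 / 360 * k ^ 6 - 1 / 36 * k ^ 5 - 1 / 18 * k ^ 4
        - 1 / 90 * k ^ 3 + 7 / 360 * k ^ 2 + 1 / 84 * k := by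
  have step : ∀ m ∈ Finset.Icc 1 k,
      (∑ s ∈ Finset.Icc 1 (k - m), (s : ℝ) ^ 2)
          * ∑ s ∈ Finset.Icc (m + 1) k, (s : ℝ) ^ 2
        = ((k : ℝ) ^ 2 / 36 + k ^ 3 / 6 + 13 * k ^ 4 / 36 + k ^ 5 / 3 + k ^ 6 / 9) * 1
          + (-(k : ℝ) / 18 - k ^ 2 / 3 - 7 * k ^ 3 / 9 - 5 * k ^ 4 / 6 - k ^ 5 / 3) * m
          + (1 / 36 + (k : ℝ) / 6 + k ^ 2 / 3 + k ^ 3 / 2 + k ^ 4 / 3) * (m : ℝ) ^ 2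
          + (2 * (k : ℝ) / 9 + k ^ 2 / 6 - 2 * k ^ 3 / 9) * (m : ℝ) ^ 3
          + (-5 / 36 - (k : ℝ) / 6 + k ^ 2 / 3) * (m : ℝ) ^ 4
          + (-(k : ℝ) / 3) * (m : ℝ) ^ 5
          + (1 / 9 : ℝ) * (m : ℝ) ^ 6 := by
    intro m hm
    rw [Finset.mem_Icc] at hm
    have h1 : ∑ s ∈ Finset.Icc 1 (k - m), (s : ℝ) ^ 2
        = ((k : ℝ) - m) * ((k : ℝ) - m + 1) * (2 * ((k : ℝ) - m) + 1) / 6 := by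
      rw [sq_sum_closed, Nat.cast_sub hm.2]
    have h2 : ∑ s ∈ Finset.Icc (m + 1) k, (s : ℝ) ^ 2
        = (k : ℝ) * (k + 1) * (2 * k + 1) / 6 - m * (m + 1) * (2 * m + 1) / 6 := by
      have hc := Finset.sum_Ioc_consecutive (fun s : ℕ => (s : ℝ) ^ 2)
        (Nat.zero_le m) hm.2
      have e1 : Finset.Icc (m + 1) k = Finset.Ioc m k := Finset.Icc_add_one_left_eq_Ioc m k
      have e2 : Finset.Icc 1 m = Finset.Ioc 0 m := Finset.Icc_add_one_left_eq_Ioc 0 m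
      have e3 : Finset.Icc 1 k = Finset.Ioc 0 k := Finset.Icc_add_one_left_eq_Ioc 0 k
      have hm' := sq_sum_closed m
      have hk' := sq_sum_closed k
      rw [e2] at hm'; rw [e3] at hk'
      rw [e1]
      linarith [hc, hm', hk']
    rw [h1, h2]; ring
  rw [Finset.sum_congr rfl step]
  simp only [Finset.sum_add_distrib, ← Finset.mul_sum]
  rw [pow1_sum, pow2_sum, pow3_sum, pow4_sum, pow5_sum, pow6_sum]
  simp only [Finset.sum_const, Nat.card_Icc, nsmul_eq_mul, mul_one]
  push_cast [Nat.add_sub_cancel]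
  ring

/-- Riemann-sum limit producing the coefficient `17/70`:
`(9/k⁷)·∑_{m=1}^{k} (∑_{s=1}^{k−m} s²)(∑_{s=m+1}^{k} s²) → 17/70`. -/
theorem riemann_sum_limit_seventeen_seventieths :
    Tendsto
      (fun k : ℕ =>
        (9 / (k : ℝ) ^ 7)
          * ∑ m ∈ Finset.Icc 1 k,
              (∑ s ∈ Finset.Icc 1 (k - m), (s : ℝ) ^ 2)
                * ∑ s ∈ Finset.Icc (m + 1) k, (s : ℝ) ^ 2)
      atTop (nhds (17 / 70)) := by
  have hinv : Tendsto (fun k : ℕ => ((k : ℝ))⁻¹) atTop (nhds 0) :=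
    tendsto_inv_atTop_zero.comp tendsto_natCast_atTop_atTop
  have hG : Tendsto (fun x : ℝ => 17 / 70 + 13 / 40 * x - 1 / 4 * x ^ 2 - 1 / 2 * x ^ 3
      - 1 / 10 * x ^ 4 + 7 / 40 * x ^ 5 + 3 / 28 * x ^ 6) (nhds 0) (nhds (17 / 70)) := by
    have hc : Continuous (fun x : ℝ => 17 / 70 + 13 / 40 * x - 1 / 4 * x ^ 2 - 1 / 2 * x ^ 3
        - 1 / 10 * x ^ 4 + 7 / 40 * x ^ 5 + 3 / 28 * x ^ 6) := by continuity
    have := hc.tendsto 0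
    simpa using this
  have hcomp := hG.comp hinv
  refine Tendsto.congr' ?_ hcomp
  filter_upwards [eventually_ge_atTop 1] with k hk
  have hk0 : (k : ℝ) ≠ 0 := by positivity
  simp only [Function.comp]
  rw [total_sum_closed]
  field_simp
  ring
end

section
/- The limit lim_{k→∞} (3/k⁵)·∑_{m=1}^{k} (k−m)·(∑_{s=m+1}^{k} s² + ∑_{s=1}^{k−m} s²) = 13/20 holds. (This Riemann-sum limit produces the coefficient 13/20 of the cross term h₁·h₂ in the covariance summation of Lemma 4, used for the asymptotic variance of the volatility of volatility estimator in Theorem 2.) -/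
/-! Each inner sum is a combination of values of `n(n+1)(2n+1)/6`, so the summand is a quartic
polynomial in `m`; the power-sum formulas up to the fourth power then give the exact value
`13k⁵/60 - k³/4 + k/30` of the double sum, and `3/k⁵` times it is `13/20 + O(k⁻²)`. -/

open Filter Finset

theorem sum_Icc_succ_eq_sub {M : Type*} [AddCommGroup M] (f : ℕ → M) {m k : ℕ} (h : m ≤ k) :
    ∑ s ∈ Icc (m + 1) k, f s = ∑ s ∈ Icc 1 k, f s - ∑ s ∈ Icc 1 m, f s := by
  rw [Icc_add_one_left_eq_Ioc, eq_sub_iff_add_eq']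
  exact sum_Ioc_consecutive f m.zero_le h

section PowerSums

variable {K : Type*} [Field K] [CharZero K]

theorem sum_Icc_cast (n : ℕ) : ∑ m ∈ Icc 1 n, (m : K) = n * (n + 1) / 2 := by
  induction n with
  | zero => simp
  | succ n ih =>
    rw [sum_Icc_succ_top (by omega), ih]
    push_cast
    ring

theorem sum_Icc_cast_pow_two (n : ℕ) :
    ∑ m ∈ Icc 1 n, (m : K) ^ 2 = n * (n + 1) * (2 * n + 1) / 6 := by
  induction n with
  | zero => simp
  | succ n ih =>
    rw [sum_Icc_succ_top (by omega), ih]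
    push_cast
    ring

theorem sum_Icc_cast_pow_three (n : ℕ) :
    ∑ m ∈ Icc 1 n, (m : K) ^ 3 = (n * (n + 1) / 2) ^ 2 := by
  induction n with
  | zero => simp
  | succ n ih =>
    rw [sum_Icc_succ_top (by omega), ih]
    push_cast
    ring

theorem sum_Icc_cast_pow_four (n : ℕ) :
    ∑ m ∈ Icc 1 n, (m : K) ^ 4 = n * (n + 1) * (2 * n + 1) * (3 * n ^ 2 + 3 * n - 1) / 30 := by
  induction n with
  | zero => simp
  | succ n ih =>
    rw [sum_Icc_succ_top (by omega), ih]
    push_cast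
    ring

theorem sum_Icc_weighted_sq_sums_eq (k : ℕ) :
    ∑ m ∈ Icc 1 k, ((k : K) - m) *
        (∑ s ∈ Icc (m + 1) k, (s : K) ^ 2 + ∑ s ∈ Icc 1 (k - m), (s : K) ^ 2)
      = 13 * (k : K) ^ 5 / 60 - (k : K) ^ 3 / 4 + (k : K) / 30 := by
  have expand : ∀ m ∈ Icc 1 k, ((k : K) - m) *
        (∑ s ∈ Icc (m + 1) k, (s : K) ^ 2 + ∑ s ∈ Icc 1 (k - m), (s : K) ^ 2)
      = (2 / 3 * k ^ 4 + k ^ 3 + 1 / 3 * k ^ 2)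
        + (-2 / 3 * k - 5 / 3 * k ^ 3 - 2 * k ^ 2) * m
        + (2 * k ^ 2 + k + 1 / 3) * m ^ 2
        + (-5 / 3 * k) * m ^ 3
        + 2 / 3 * m ^ 4 := by
    intro m hm
    have hmk : m ≤ k := (mem_Icc.mp hm).2
    rw [sum_Icc_succ_eq_sub _ hmk]
    simp only [sum_Icc_cast_pow_two, Nat.cast_sub hmk]
    ring
  rw [sum_congr rfl expand]
  simp only [sum_add_distrib, ← mul_sum, sum_const, Nat.card_Icc, nsmul_eq_mul,
    Nat.add_sub_cancel]
  rw [sum_Icc_cast, sum_Icc_cast_pow_two, sum_Icc_cast_pow_three, sum_Icc_cast_pow_four]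
  ring

end PowerSums

/-- Riemann-sum limit producing the coefficient `13/20`:
`(3/k⁵)·∑_{m=1}^{k} (k−m)(∑_{s=m+1}^{k} s² + ∑_{s=1}^{k−m} s²) → 13/20`. -/
theorem riemann_sum_limit_thirteen_twentieths :
    Tendsto
      (fun k : ℕ =>
        (3 / (k : ℝ) ^ 5)
          * ∑ m ∈ Finset.Icc 1 k,
              ((k : ℝ) - (m : ℝ))
                * (∑ s ∈ Finset.Icc (m + 1) k, (s : ℝ) ^ 2
                    + ∑ s ∈ Finset.Icc 1 (k - m), (s : ℝ) ^ 2))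
      atTop (nhds (13 / 20)) := by
  have closed_form : ∀ᶠ k : ℕ in atTop,
      13 / 20 - 3 / 4 * ((k : ℝ)⁻¹) ^ 2 + 1 / 10 * ((k : ℝ)⁻¹) ^ 4
        = 3 / (k : ℝ) ^ 5 * ∑ m ∈ Icc 1 k, ((k : ℝ) - m) *
            (∑ s ∈ Icc (m + 1) k, (s : ℝ) ^ 2 + ∑ s ∈ Icc 1 (k - m), (s : ℝ) ^ 2) := by
    filter_upwards [eventually_ne_atTop 0] with k hk
    rw [sum_Icc_weighted_sq_sums_eq]
    field_simp
    ring
  have inv_tendsto := tendsto_inv_atTop_nhds_zero_nat (𝕜 := ℝ)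
  have limit := ((tendsto_const_nhds (x := (13 / 20 : ℝ))).sub
    ((inv_tendsto.pow 2).const_mul (3 / 4))).add ((inv_tendsto.pow 4).const_mul (1 / 10))
  rw [zero_pow two_ne_zero, zero_pow four_ne_zero, mul_zero, mul_zero, sub_zero, add_zero]
    at limit
  exact limit.congr' closed_form
end

section
/- Let σ > 0 and u ≠ 0. Let (Y_j)_{j≥1} be an i.i.d. sequence of real random variables with law N(0,σ²), and let (J_j)_{j≥1} be an i.i.d. sequence, independent of (Y_j), whose common law is symmetric and satisfies E[cos(u·J₁)] > 0; set W_j := Y_j + J_j. For each k let σ̂²_{k,−} be the ECF spot variance estimator computed from W₁,…,W_k and σ̂²_{k,+} the ECF spot variance estimator computed from W_{k+1},…,W_{2k}. Then σ̂²_{k,+} − σ̂²_{k,−} → 0 almost surely as k → ∞. (This is the bias-cancellation phenomenon of Remark 3: the jump-induced biases of the spot volatility estimates over consecutive windows cancel in their difference, which is the key to the estimators of leverage effect and volatility of volatility.) -/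
open MeasureTheory ProbabilityTheory Real Finset Filter

open scoped Topology

/-!
The variables `cos (u W_j)` are i.i.d. and bounded. Their mean is the real part of the
characteristic function of `W₁ = Y₁ + J₁` at `u`, which by independence is the product of the
Gaussian characteristic function `exp (-σ² u² / 2)` (a positive real) and that of `J₁`; hence it
equals `exp (-σ² u² / 2) E[cos (u J₁)] > 0`. By the strong law of large numbers the averages over
both windows converge almost surely to this mean, so both estimators converge to the same biased
limit `σ² - (2 / u²) log E[cos (u J₁)]`, and their difference tends to `0`.
-/

lemma re_charFun_eq_integral_cos {μ : Measure ℝ} [IsFiniteMeasure μ] (t : ℝ) :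
    (charFun μ t).re = ∫ x, cos (t * x) ∂μ := by
  have hint : Integrable (fun x : ℝ => Complex.exp (t * x * Complex.I)) μ :=
    (integrable_const (1 : ℝ)).mono' (by fun_prop) (ae_of_all _ fun x => by
      simp [← Complex.ofReal_mul, Complex.norm_exp_ofReal_mul_I])
  have hre := integral_re hint
  simp only [RCLike.re_to_complex] at hre
  rw [charFun_apply_real, ← hre]
  simp [← Complex.ofReal_mul, Complex.exp_ofReal_mul_I_re]

namespace ProbabilityTheory

lemma IndepFun.integral_cos_mul_add_of_map_eq_gaussianReal {Ω : Type*} [MeasurableSpace Ω]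
    {μ : Measure Ω} [IsProbabilityMeasure μ] {X Z : Ω → ℝ} {v : NNReal}
    (hX : Measurable X) (hZ : Measurable Z) (hXZ : IndepFun X Z μ)
    (hXlaw : μ.map X = gaussianReal 0 v) (t : ℝ) :
    ∫ ω, cos (t * (X ω + Z ω)) ∂μ = exp (-(v * t ^ 2 / 2)) * ∫ ω, cos (t * Z ω) ∂μ := by
  have hcos : Measurable fun x : ℝ => cos (t * x) := by fun_prop
  have hgauss : charFun (gaussianReal 0 v) t = (exp (-(v * t ^ 2 / 2)) : ℝ) := by
    rw [charFun_gaussianReal]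
    push_cast
    ring_nf
  rw [← integral_map (φ := fun ω => X ω + Z ω) (hX.add hZ).aemeasurable
      hcos.aestronglyMeasurable,
    ← integral_map hZ.aemeasurable hcos.aestronglyMeasurable,
    ← re_charFun_eq_integral_cos, ← re_charFun_eq_integral_cos,
    hXZ.charFun_map_fun_add_eq_mul hX.aemeasurable hZ.aemeasurable, Pi.mul_apply, hXlaw,
    hgauss, Complex.re_ofReal_mul]

variable {Ω β : Type*} [MeasurableSpace Ω] {μ : Measure Ω} [MeasurableSpace β] {Y J : ℕ → Ω → β}

lemma iIndepFun.pairwise_indepFun_comp_prodMk {γ : Type*} [MeasurableSpace γ]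
    (h : iIndepFun (Sum.elim Y J) μ) (hm : ∀ i, Measurable (Sum.elim Y J i))
    {g : β × β → γ} (hg : Measurable g) :
    Pairwise fun a b => IndepFun (fun ω => g (Y a ω, J a ω)) (fun ω => g (Y b ω, J b ω)) μ := by
  intro a b hab
  exact (h.indepFun_prodMk_prodMk hm (.inl a) (.inr a) (.inl b) (.inr b) (by simpa using hab)
    (by simp) (by simp) (by simpa using hab)).comp hg hg

lemma iIndepFun.strong_law_ae_comp_prodMk [IsFiniteMeasure μ]
    (h : iIndepFun (Sum.elim Y J) μ) (hm : ∀ i, Measurable (Sum.elim Y J i))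
    (hYid : ∀ j, μ.map (Y j) = μ.map (Y 1)) (hJid : ∀ j, μ.map (J j) = μ.map (J 1))
    {g : β × β → ℝ} (hg : Measurable g) (hint : Integrable (fun ω => g (Y 1 ω, J 1 ω)) μ) :
    ∀ᵐ ω ∂μ, Tendsto (fun n : ℕ => (n : ℝ)⁻¹ * ∑ j ∈ Icc 1 n, g (Y j ω, J j ω)) atTop
      (𝓝 (∫ ω, g (Y 1 ω, J 1 ω) ∂μ)) := by
  have hY (j : ℕ) : Measurable (Y j) := hm (.inl j)
  have hJ (j : ℕ) : Measurable (J j) := hm (.inr j)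
  have hYJ (j : ℕ) : IndepFun (Y j) (J j) μ := h.indepFun (i := .inl j) (j := .inr j) (by simp)
  set X : ℕ → Ω → ℝ := fun i ω => g (Y (i + 1) ω, J (i + 1) ω)
  have hXindep : Pairwise fun a b => IndepFun (X a) (X b) μ :=
    (h.pairwise_indepFun_comp_prodMk hm hg).comp_of_injective (add_left_injective 1)
  have hXid (i : ℕ) : IdentDistrib (X i) (X 0) μ μ :=
    (IdentDistrib.prodMk ⟨(hY _).aemeasurable, (hY _).aemeasurable, hYid _⟩
      ⟨(hJ _).aemeasurable, (hJ _).aemeasurable, hJid _⟩ (hYJ _) (hYJ _)).comp hg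
  filter_upwards [strong_law_ae X hint hXindep hXid] with ω hω
  have hsum (n : ℕ) : ∑ i ∈ range n, X i ω = ∑ j ∈ Icc 1 n, g (Y j ω, J j ω) := by
    rw [← Ico_add_one_right_eq_Icc, sum_Ico_eq_sum_range, add_tsub_cancel_right]
    exact sum_congr rfl fun i _ => by simp only [X, add_comm]
  simpa only [smul_eq_mul, hsum] using hω

end ProbabilityTheory

lemma tendsto_inv_mul_sum_Icc_succ_two_mul {f : ℕ → ℝ} {m : ℝ}
    (h : Tendsto (fun n : ℕ => (n : ℝ)⁻¹ * ∑ j ∈ Icc 1 n, f j) atTop (𝓝 m)) :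
    Tendsto (fun n : ℕ => (n : ℝ)⁻¹ * ∑ j ∈ Icc (n + 1) (2 * n), f j) atTop (𝓝 m) := by
  have h2 : Tendsto (fun n : ℕ => 2 * (((2 * n : ℕ) : ℝ)⁻¹ * ∑ j ∈ Icc 1 (2 * n), f j)
      - (n : ℝ)⁻¹ * ∑ j ∈ Icc 1 n, f j) atTop (𝓝 (2 * m - m)) :=
    ((h.comp (tendsto_id.const_mul_atTop' two_pos)).const_mul 2).sub h
  rw [two_mul m, add_sub_cancel_right] at h2
  refine h2.congr' ?_
  filter_upwards [eventually_ne_atTop 0] with n hn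
  have hsplit : ∑ j ∈ Icc 1 (2 * n), f j
      = ∑ j ∈ Icc 1 n, f j + ∑ j ∈ Icc (n + 1) (2 * n), f j := by
    have := sum_Ioc_consecutive f n.zero_le (show n ≤ 2 * n by omega)
    simpa only [← Icc_add_one_left_eq_Ioc, zero_add] using this.symm
  rw [hsplit]
  push_cast
  field_simp
  ring

/-- The ECF spot variance estimator of a window of length `k` whose empirical mean of
`cos (u W_j)` is `c`. -/
noncomputable def ecfSpotVariance (u : ℝ) (k : ℕ) (c : ℝ) : ℝ :=
  -(2 / u ^ 2) * log (max c (√(k : ℝ))⁻¹)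

lemma tendsto_ecfSpotVariance (u : ℝ) {m : ℝ} (hm : 0 < m) {A : ℕ → ℝ}
    (hA : Tendsto A atTop (𝓝 m)) :
    Tendsto (fun k => ecfSpotVariance u k (A k)) atTop (𝓝 (-(2 / u ^ 2) * log m)) := by
  have hfloor : Tendsto (fun k : ℕ => (√(k : ℝ))⁻¹) atTop (𝓝 0) :=
    tendsto_inv_atTop_zero.comp (tendsto_sqrt_atTop.comp tendsto_natCast_atTop_atTop)
  have hmax := hA.max hfloor
  rw [max_eq_left hm.le] at hmax
  exact ((continuousAt_log hm.ne').tendsto.comp hmax).const_mul _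

theorem ecf_spot_variance_bias_cancellation_general {Ω : Type*} [MeasureSpace Ω]
    [IsProbabilityMeasure (ℙ : Measure Ω)]
    (σ u : ℝ)
    (Y J : ℕ → Ω → ℝ)
    (hmeas : ∀ i : ℕ ⊕ ℕ, Measurable (Sum.elim Y J i))
    -- all the variables `Y₁, J₁, Y₂, J₂, …` are jointly independent
    (hindep : iIndepFun (Sum.elim Y J) ℙ)
    -- `(Y_j)` is i.i.d. `N(0,σ²)`
    (hYlaw : ∀ j, Measure.map (Y j) ℙ = gaussianReal 0 ⟨σ ^ 2, sq_nonneg σ⟩)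
    -- `(J_j)` is i.i.d. with a symmetric common law and `E[cos(u·J₁)] > 0`
    (hJid : ∀ j, Measure.map (J j) ℙ = Measure.map (J 1) ℙ)
    (hψ : 0 < ∫ ω, Real.cos (u * J 1 ω) ∂ℙ)
    (W : ℕ → Ω → ℝ) (hW : ∀ j ω, W j ω = Y j ω + J j ω)
    (estMinus estPlus : ℕ → Ω → ℝ)
    (hestMinus : ∀ k ω, estMinus k ω
      = -(2 / u ^ 2) * Real.log
          (max ((1 / (k : ℝ)) * ∑ j ∈ Finset.Icc 1 k, Real.cos (u * W j ω))
            ((Real.sqrt k)⁻¹)))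
    (hestPlus : ∀ k ω, estPlus k ω
      = -(2 / u ^ 2) * Real.log
          (max ((1 / (k : ℝ)) * ∑ j ∈ Finset.Icc (k + 1) (2 * k), Real.cos (u * W j ω))
            ((Real.sqrt k)⁻¹))) :
    ∀ᵐ ω ∂ℙ, Tendsto (fun k => estPlus k ω - estMinus k ω) atTop (nhds 0) := by
  set g : ℝ × ℝ → ℝ := fun p => cos (u * (p.1 + p.2))
  have hg : Measurable g := by fun_prop
  have hY1 : Measurable (Y 1) := hmeas (.inl 1)
  have hJ1 : Measurable (J 1) := hmeas (.inr 1)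
  have hYJ1 : IndepFun (Y 1) (J 1) ℙ := hindep.indepFun (i := .inl 1) (j := .inr 1) (by simp)
  have hmean : ∫ ω, g (Y 1 ω, J 1 ω) ∂ℙ = exp (-(σ ^ 2 * u ^ 2 / 2)) * ∫ ω, cos (u * J 1 ω) ∂ℙ :=
    hYJ1.integral_cos_mul_add_of_map_eq_gaussianReal hY1 hJ1 (hYlaw 1) u
  have hm : 0 < ∫ ω, g (Y 1 ω, J 1 ω) ∂ℙ := hmean ▸ mul_pos (exp_pos _) hψ
  have hint : Integrable (fun ω => g (Y 1 ω, J 1 ω)) ℙ :=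
    .of_bound (hg.comp (hY1.prodMk hJ1)).aestronglyMeasurable 1
      (ae_of_all _ fun ω => abs_cos_le_one _)
  filter_upwards [hindep.strong_law_ae_comp_prodMk hmeas (fun j => by rw [hYlaw, hYlaw]) hJid hg
    hint] with ω hω
  have hA : Tendsto (fun k : ℕ => (k : ℝ)⁻¹ * ∑ j ∈ Icc 1 k, cos (u * W j ω)) atTop
      (𝓝 (∫ ω, g (Y 1 ω, J 1 ω) ∂ℙ)) := by
    simpa only [g, hW] using hω
  have hest := (tendsto_ecfSpotVariance u hm (tendsto_inv_mul_sum_Icc_succ_two_mul hA)).sub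
    (tendsto_ecfSpotVariance u hm hA)
  rw [sub_self] at hest
  refine hest.congr fun k => ?_
  simp only [hestPlus, hestMinus, ecfSpotVariance, one_div]

/-- Bias cancellation for consecutive windows: with `W_j = Y_j + J_j` (Gaussian plus
an independent symmetric i.i.d. jump component with `E[cos(u·J₁)] > 0`), the difference
between the ECF spot variance estimators over the windows `W_{k+1},…,W_{2k}` and
`W₁,…,W_k` tends to `0` almost surely. -/
theorem ecf_spot_variance_bias_cancellation {Ω : Type*} [MeasureSpace Ω]
    [IsProbabilityMeasure (ℙ : Measure Ω)]
    (σ u : ℝ) (hσ : 0 < σ) (hu : u ≠ 0)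
    (Y J : ℕ → Ω → ℝ)
    (hmeas : ∀ i : ℕ ⊕ ℕ, Measurable (Sum.elim Y J i))
    -- all the variables `Y₁, J₁, Y₂, J₂, …` are jointly independent
    (hindep : iIndepFun (Sum.elim Y J) ℙ)
    -- `(Y_j)` is i.i.d. `N(0,σ²)`
    (hYlaw : ∀ j, Measure.map (Y j) ℙ = gaussianReal 0 ⟨σ ^ 2, sq_nonneg σ⟩)
    -- `(J_j)` is i.i.d. with a symmetric common law and `E[cos(u·J₁)] > 0`
    (hJid : ∀ j, Measure.map (J j) ℙ = Measure.map (J 1) ℙ)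
    (hJsym : Measure.map (fun ω => -(J 1 ω)) ℙ = Measure.map (J 1) ℙ)
    (hψ : 0 < ∫ ω, Real.cos (u * J 1 ω) ∂ℙ)
    (W : ℕ → Ω → ℝ) (hW : ∀ j ω, W j ω = Y j ω + J j ω)
    (estMinus estPlus : ℕ → Ω → ℝ)
    (hestMinus : ∀ k ω, estMinus k ω
      = -(2 / u ^ 2) * Real.log
          (max ((1 / (k : ℝ)) * ∑ j ∈ Finset.Icc 1 k, Real.cos (u * W j ω))
            ((Real.sqrt k)⁻¹)))
    (hestPlus : ∀ k ω, estPlus k ω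
      = -(2 / u ^ 2) * Real.log
          (max ((1 / (k : ℝ)) * ∑ j ∈ Finset.Icc (k + 1) (2 * k), Real.cos (u * W j ω))
            ((Real.sqrt k)⁻¹))) :
    ∀ᵐ ω ∂ℙ, Tendsto (fun k => estPlus k ω - estMinus k ω) atTop (nhds 0) :=
  ecf_spot_variance_bias_cancellation_general σ u Y J hmeas hindep hYlaw hJid hψ W hW estMinus
    estPlus hestMinus hestPlus
end
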